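/- arXiv:1610.09984 — 3 statements merged into one kernel-verified Lean document; each statement's English description precedes it below -/
import Mathlib

section
/- Let f : 2^V → ℝ≥0 be a monotone submodular function with f(∅) = 0, let τ > 0, and let S ⊆ A ⊆ V be such that for every x ∈ A \ S, the marginal gain f(S ∪ {x}) − f(S) < τ. Then for every B ⊆ A with |B| ≤ k, we have f(B) ≤ f(S) + k·τ. -/
/-!
Adding the elements of `B \ S` to `S` one at a time, submodularity bounds each step by the
marginal gain of that element with respect to `S` itself, each of which is below `τ`. Hence
`f (S ∪ B) ≤ f S + |B \ S| τ ≤ f S + k τ`, and monotonicity gives `f B ≤ f (S ∪ B)`.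
-/

open Finset

section Marginal

variable {V β : Type*} [DecidableEq V] [AddCommGroup β] [LinearOrder β] [IsOrderedAddMonoid β]

def marginalGain (f : Finset V → β) (S : Finset V) (x : V) : β :=
  f (insert x S) - f S

theorem apply_union_le_add_sum_marginalGain {f : Finset V → β}
    (hsub : ∀ S T : Finset V, S ⊆ T → ∀ v ∉ T, marginalGain f T v ≤ marginalGain f S v)
    (S D : Finset V) : f (S ∪ D) ≤ f S + ∑ x ∈ D \ S, marginalGain f S x := by
  induction D using Finset.induction_on with
  | empty => simp
  | @insert a D ha ih =>
    by_cases haS : a ∈ S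
    · rwa [union_insert, insert_eq_of_mem (mem_union_left D haS), insert_sdiff_of_mem D haS]
    · have haSD : a ∉ S ∪ D := by simp [haS, ha]
      have hstep := hsub S (S ∪ D) subset_union_left a haSD
      rw [union_insert, insert_sdiff_of_notMem D haS, sum_insert (by simp [ha])]
      calc f (insert a (S ∪ D)) = f (S ∪ D) + marginalGain f (S ∪ D) a := (add_sub_cancel _ _).symm
        _ ≤ f S + ∑ x ∈ D \ S, marginalGain f S x + marginalGain f S a := add_le_add ih hstep
        _ = f S + (marginalGain f S a + ∑ x ∈ D \ S, marginalGain f S x) := by abel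

theorem apply_le_add_card_sdiff_nsmul {f : Finset V → β} (hmono : Monotone f)
    (hsub : ∀ S T : Finset V, S ⊆ T → ∀ v ∉ T, marginalGain f T v ≤ marginalGain f S v)
    {S B : Finset V} {τ : β} (hsmall : ∀ x ∈ B \ S, marginalGain f S x ≤ τ) :
    f B ≤ f S + #(B \ S) • τ :=
  calc f B ≤ f (S ∪ B) := hmono subset_union_right
    _ ≤ f S + ∑ x ∈ B \ S, marginalGain f S x := apply_union_le_add_sum_marginalGain hsub S B
    _ ≤ f S + #(B \ S) • τ := by gcongr; exact sum_le_card_nsmul _ _ _ hsmall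

end Marginal

theorem small_marginals_bound_general {V : Type*} [DecidableEq V] (f : Finset V → ℝ)
    (hmono : ∀ S T : Finset V, S ⊆ T → f S ≤ f T)
    (hsub : ∀ S T : Finset V, S ⊆ T → ∀ v ∉ T,
      f (insert v T) - f T ≤ f (insert v S) - f S)
    (k : ℕ) (τ : ℝ) (hτ : 0 < τ)
    (A S : Finset V)
    (hsmall : ∀ x ∈ A \ S, f (insert x S) - f S < τ)
    (B : Finset V) (hBA : B ⊆ A) (hBcard : B.card ≤ k) :
    f B ≤ f S + (k : ℝ) * τ := by
  have hcard : #(B \ S) ≤ k := (card_le_card sdiff_subset).trans hBcard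
  calc f B ≤ f S + #(B \ S) • τ :=
        apply_le_add_card_sdiff_nsmul (fun _ _ => hmono _ _) hsub
          fun x hx => (hsmall x (sdiff_subset_sdiff hBA subset_rfl hx)).le
    _ ≤ f S + k • τ := by gcongr
    _ = f S + (k : ℝ) * τ := by rw [nsmul_eq_mul]

theorem small_marginals_bound {V : Type*} [DecidableEq V] (f : Finset V → ℝ)
    (hmono : ∀ S T : Finset V, S ⊆ T → f S ≤ f T)
    (hempty : f ∅ = 0)
    (hsub : ∀ S T : Finset V, S ⊆ T → ∀ v ∉ T,
      f (insert v T) - f T ≤ f (insert v S) - f S)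
    (k : ℕ) (hk : 1 ≤ k) (τ : ℝ) (hτ : 0 < τ)
    (A S : Finset V) (hSA : S ⊆ A)
    (hsmall : ∀ x ∈ A \ S, f (insert x S) - f S < τ)
    (B : Finset V) (hBA : B ⊆ A) (hBcard : B.card ≤ k) :
    f B ≤ f S + (k : ℝ) * τ :=
  small_marginals_bound_general f hmono hsub k τ hτ A S hsmall B hBA hBcard
end

section
/- Let f : 2^V → ℝ≥0 be monotone submodular with f(∅) = 0, let k ≥ 1, k' with 1 ≤ k' ≤ k, and let τ satisfy (1−δ)·f_{k'}(A)/(k+k') ≤ τ ≤ f_{k'}(A)/(k+k') for some δ ∈ (0,1), where f_{k'}(A) = max_{B ⊆ A, |B| = k'} f(B). Suppose S ⊆ A is a set produced by the threshold rule: elements are processed in some order and each element x is added iff |S| < k and the marginal gain of x with respect to the current set is ≥ τ. Then f(S) ≥ (1−δ) · (k/(k+k')) · f_{k'}(A). -/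
/-!
Take an optimal `k'`-set `B ⊆ A`, so `f B = f_{k'}(A)`. If the rule stopped because `|S| = k`,
then `f S ≥ k τ` and the lower bound on `τ` finishes. Otherwise every element of `B \ S` has
marginal gain below `τ` at `S`, and submodularity bounds the gain of adding all of `B` to `S`
by the sum of these single gains: `f B ≤ f (S ∪ B) ≤ f S + k' τ`. The upper bound on `τ` then
gives `f S ≥ (k / (k + k')) f B`.
-/

open Finset

section Submodular

variable {α β : Type*} [DecidableEq α] [AddCommGroup β] [PartialOrder β] [IsOrderedAddMonoid β]
  {f : Finset α → β}

theorem sub_le_sum_marginal_of_disjoint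
    (hsub : ∀ S T : Finset α, S ⊆ T → ∀ v ∉ T,
      f (insert v T) - f T ≤ f (insert v S) - f S)
    {S C : Finset α} (hSC : Disjoint S C) :
    f (S ∪ C) - f S ≤ ∑ x ∈ C, (f (insert x S) - f S) := by
  induction C using Finset.induction_on with
  | empty => simp
  | insert a C haC ih =>
    rw [disjoint_insert_right] at hSC
    have haSC : a ∉ S ∪ C := by simp [hSC.1, haC]
    rw [union_insert, sum_insert haC]
    calc f (insert a (S ∪ C)) - f S
        = (f (insert a (S ∪ C)) - f (S ∪ C)) + (f (S ∪ C) - f S) := by abel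
      _ ≤ (f (insert a S) - f S) + ∑ x ∈ C, (f (insert x S) - f S) :=
        add_le_add (hsub S (S ∪ C) subset_union_left a haSC) (ih hSC.2)

theorem le_add_card_nsmul_of_marginal_le
    (hmono : ∀ S T : Finset α, S ⊆ T → f S ≤ f T)
    (hsub : ∀ S T : Finset α, S ⊆ T → ∀ v ∉ T,
      f (insert v T) - f T ≤ f (insert v S) - f S)
    {S B : Finset α} {τ : β} (hτ : ∀ x ∈ B \ S, f (insert x S) - f S ≤ τ) :
    f B ≤ f S + #(B \ S) • τ := by
  have hgain := sub_le_sum_marginal_of_disjoint hsub (disjoint_sdiff : Disjoint S (B \ S))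
  rw [union_sdiff_self_eq_union] at hgain
  calc f B ≤ f (S ∪ B) := hmono _ _ subset_union_right
    _ = f S + (f (S ∪ B) - f S) := by abel
    _ ≤ f S + #(B \ S) • τ := add_le_add_right (hgain.trans (sum_le_card_nsmul _ _ _ hτ)) _

end Submodular

theorem threshold_guarantee_general {V : Type*} [DecidableEq V] (f : Finset V → ℝ)
    (hmono : ∀ S T : Finset V, S ⊆ T → f S ≤ f T)
    (hempty : f ∅ = 0)
    (hsub : ∀ S T : Finset V, S ⊆ T → ∀ v ∉ T,
      f (insert v T) - f T ≤ f (insert v S) - f S)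
    (A : Finset V) (k k' : ℕ) (hk' : 1 ≤ k')
    (δ : ℝ) (hδ0 : 0 < δ) (hδ1 : δ < 1)
    (fkA : ℝ) (hfk : IsGreatest {x : ℝ | ∃ B ⊆ A, B.card = k' ∧ f B = x} fkA)
    (τ : ℝ)
    (hτ1 : (1 - δ) * fkA / ((k : ℝ) + k') ≤ τ)
    (hτ2 : τ ≤ fkA / ((k : ℝ) + k'))
    (S : Finset V)
    (hrule : (S.card = k ∧ f S ≥ (k : ℝ) * τ) ∨
             (∀ x ∈ A \ S, f (insert x S) - f S < τ)) :
    f S ≥ (1 - δ) * ((k : ℝ) / ((k : ℝ) + k')) * fkA := by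
  obtain ⟨⟨B, hBA, hBcard, rfl⟩, -⟩ := hfk
  have hpos : (0 : ℝ) < k + k' := by
    have : (1 : ℝ) ≤ k' := by exact_mod_cast hk'
    positivity
  have hfB : 0 ≤ f B := hempty ▸ hmono _ _ (empty_subset B)
  rcases hrule with ⟨-, hkτ⟩ | hmarg
  · calc (1 - δ) * ((k : ℝ) / (k + k')) * f B = k * ((1 - δ) * f B / (k + k')) := by ring
      _ ≤ k * τ := by gcongr
      _ ≤ f S := hkτ
  · have hτ0 : 0 ≤ τ := le_trans (div_nonneg (mul_nonneg (by linarith) hfB) hpos.le) hτ1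
    have hBS : f B ≤ f S + k' * τ :=
      calc f B ≤ f S + #(B \ S) • τ := le_add_card_nsmul_of_marginal_le hmono hsub
              fun x hx ↦ (hmarg x (sdiff_subset_sdiff hBA le_rfl hx)).le
        _ ≤ f S + k' * τ := by
          rw [nsmul_eq_mul]
          gcongr
          exact_mod_cast hBcard ▸ card_le_card sdiff_subset
    have hfS : (k : ℝ) / (k + k') * f B ≤ f S := by
      have : (k : ℝ) / (k + k') * f B = f B - k' * (f B / (k + k')) := by field_simp; ring
      linarith [mul_le_mul_of_nonneg_left hτ2 (Nat.cast_nonneg (α := ℝ) k')]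
    calc (1 - δ) * ((k : ℝ) / (k + k')) * f B ≤ 1 * ((k : ℝ) / (k + k')) * f B := by
          gcongr; linarith
      _ ≤ f S := by rwa [one_mul]

theorem threshold_guarantee {V : Type*} [DecidableEq V] (f : Finset V → ℝ)
    (hmono : ∀ S T : Finset V, S ⊆ T → f S ≤ f T)
    (hempty : f ∅ = 0)
    (hsub : ∀ S T : Finset V, S ⊆ T → ∀ v ∉ T,
      f (insert v T) - f T ≤ f (insert v S) - f S)
    (A : Finset V) (k k' : ℕ) (hk' : 1 ≤ k') (hk'k : k' ≤ k)
    (δ : ℝ) (hδ0 : 0 < δ) (hδ1 : δ < 1)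
    (fkA : ℝ) (hfk : IsGreatest {x : ℝ | ∃ B ⊆ A, B.card = k' ∧ f B = x} fkA)
    (τ : ℝ)
    (hτ1 : (1 - δ) * fkA / ((k : ℝ) + k') ≤ τ)
    (hτ2 : τ ≤ fkA / ((k : ℝ) + k'))
    (S : Finset V) (hSA : S ⊆ A)
    (hrule : (S.card = k ∧ f S ≥ (k : ℝ) * τ) ∨
             (∀ x ∈ A \ S, f (insert x S) - f S < τ)) :
    f S ≥ (1 - δ) * ((k : ℝ) / ((k : ℝ) + k')) * fkA :=
  threshold_guarantee_general f hmono hempty hsub A k k' hk' δ hδ0 hδ1 fkA hfk τ hτ1 hτ2 S hrule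
end

section
/- Let f : 2^V → ℝ≥0 be monotone submodular with f(∅) = 0, and let OPT ⊆ V with |OPT| ≤ k be partitioned as OPT = OPT₁ ∪ OPT₂ with OPT₁ ∩ OPT₂ = ∅, |OPT₁| = k₁, |OPT₂| = k₂. Suppose h₁ and h₂ are real numbers satisfying h₁ ≥ (1−δ)·k·f(OPT₁)/(k+k₁), h₂ ≥ (1−δ)·k·f(OPT₂)/(k+k₂), and h₂ ≥ (1−β)·h₁, where β = δ = ε/2 for some ε ∈ (0,1). Then h₂ ≥ (1/3)·(1−ε)·f(OPT). -/
/-!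
Subadditivity gives `f OPT ≤ f OPT₁ + f OPT₂`. Writing `c = 1 - ε/2`, the two hypotheses on `h₂`
(the second one through `h₂ ≥ c h₁`) clear denominators to
`c² k f(OPT₁) ≤ (k + k₁) h₂` and `c k f(OPT₂) ≤ (k + k₂) h₂`.
Adding them and using `k₁ + k₂ ≤ k` gives `c² k (f OPT₁ + f OPT₂) ≤ 3 k h₂`, and `1 - ε ≤ c²`.
-/

theorem apply_union_le_add {V : Type*} [DecidableEq V] {f : Finset V → ℝ}
    (hmono : ∀ S T : Finset V, S ⊆ T → f S ≤ f T) (hempty : f ∅ = 0)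
    (hsub : ∀ S T : Finset V, S ⊆ T → ∀ v ∉ T,
      f (insert v T) - f T ≤ f (insert v S) - f S)
    (S T : Finset V) : f (S ∪ T) ≤ f S + f T := by
  induction T using Finset.induction_on with
  | empty => simp [hempty]
  | insert v T _ ih =>
    rw [Finset.union_insert]
    by_cases hv : v ∈ S ∪ T
    · rw [Finset.insert_eq_of_mem hv]
      linarith [hmono T (insert v T) (Finset.subset_insert v T)]
    · linarith [hsub T (S ∪ T) Finset.subset_union_right v hv]

theorem add_le_three_mul_of_le_mul {k k₁ k₂ a b x : ℝ} (hk12 : k₁ + k₂ ≤ k) (hx : 0 ≤ x)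
    (ha : a ≤ (k + k₁) * x) (hb : b ≤ (k + k₂) * x) : a + b ≤ 3 * k * x := by
  linarith [mul_le_mul_of_nonneg_right hk12 hx]

theorem one_third_core_general {V : Type*} [DecidableEq V] (f : Finset V → ℝ)
    (hmono : ∀ S T : Finset V, S ⊆ T → f S ≤ f T)
    (hempty : f ∅ = 0)
    (hsub : ∀ S T : Finset V, S ⊆ T → ∀ v ∉ T,
      f (insert v T) - f T ≤ f (insert v S) - f S)
    (k k₁ k₂ : ℕ) (hk : 1 ≤ k) (hk12 : k₁ + k₂ ≤ k)
    (OPT OPT₁ OPT₂ : Finset V)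
    (hunion : OPT = OPT₁ ∪ OPT₂)
    (ε : ℝ) (hε0 : 0 < ε) (hε1 : ε < 1)
    (δ β : ℝ) (hδ : δ = ε / 2) (hβ : β = ε / 2)
    (h₁ h₂ : ℝ)
    (hh1 : h₁ ≥ (1 - δ) * (k : ℝ) * f OPT₁ / ((k : ℝ) + k₁))
    (hh2 : h₂ ≥ (1 - δ) * (k : ℝ) * f OPT₂ / ((k : ℝ) + k₂))
    (hh21 : h₂ ≥ (1 - β) * h₁) :
    h₂ ≥ (1 / 3) * (1 - ε) * f OPT := by
  subst hδ hβ hunion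
  set c := 1 - ε / 2 with hc
  have hkpos : (0 : ℝ) < k := by exact_mod_cast hk
  have hk12' : (k₁ : ℝ) + k₂ ≤ k := by exact_mod_cast hk12
  have hf₂ : 0 ≤ f OPT₂ := hempty ▸ hmono ∅ OPT₂ (Finset.empty_subset _)
  have hf : 0 ≤ f (OPT₁ ∪ OPT₂) := hempty ▸ hmono ∅ _ (Finset.empty_subset _)
  have hsubadd : f (OPT₁ ∪ OPT₂) ≤ f OPT₁ + f OPT₂ := apply_union_le_add hmono hempty hsub _ _
  have hc0 : 0 ≤ c := by linarith
  have hc1 : c ≤ 1 := by linarith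
  have hcsq : 1 - ε ≤ c * c := by nlinarith [sq_nonneg ε]
  have hb : c * k * f OPT₂ ≤ (k + k₂) * h₂ := by
    rw [mul_comm _ h₂]; exact (div_le_iff₀ (by positivity)).mp hh2
  have ha : c * (c * k * f OPT₁) ≤ (k + k₁) * h₂ := by
    have h1 : c * k * f OPT₁ ≤ (k + k₁) * h₁ := by
      rw [mul_comm _ h₁]; exact (div_le_iff₀ (by positivity)).mp hh1
    calc c * (c * k * f OPT₁) ≤ c * ((k + k₁) * h₁) := by gcongr
      _ = (k + k₁) * (c * h₁) := by ring
      _ ≤ (k + k₁) * h₂ := by gcongr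
  have hh₂ : 0 ≤ h₂ := le_trans (by positivity) hh2
  have hcB : c * (c * k * f OPT₂) ≤ c * k * f OPT₂ := mul_le_of_le_one_left (by positivity) hc1
  have hkey : (1 - ε) * f (OPT₁ ∪ OPT₂) * k ≤ 3 * k * h₂ :=
    calc (1 - ε) * f (OPT₁ ∪ OPT₂) * k
        ≤ c * c * (f OPT₁ + f OPT₂) * k := by gcongr
      _ ≤ c * (c * k * f OPT₁) + c * k * f OPT₂ := by linarith
      _ ≤ 3 * k * h₂ := add_le_three_mul_of_le_mul hk12' hh₂ ha hb
  exact le_of_mul_le_mul_right (by linarith) (by positivity : (0 : ℝ) < 3 * k)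

theorem one_third_core {V : Type*} [DecidableEq V] (f : Finset V → ℝ)
    (hmono : ∀ S T : Finset V, S ⊆ T → f S ≤ f T)
    (hempty : f ∅ = 0)
    (hsub : ∀ S T : Finset V, S ⊆ T → ∀ v ∉ T,
      f (insert v T) - f T ≤ f (insert v S) - f S)
    (k k₁ k₂ : ℕ) (hk : 1 ≤ k) (hk12 : k₁ + k₂ ≤ k)
    (OPT OPT₁ OPT₂ : Finset V)
    (hunion : OPT = OPT₁ ∪ OPT₂) (hdisj : Disjoint OPT₁ OPT₂)
    (hc1 : OPT₁.card = k₁) (hc2 : OPT₂.card = k₂)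
    (hpos : 0 < f OPT)
    (ε : ℝ) (hε0 : 0 < ε) (hε1 : ε < 1)
    (δ β : ℝ) (hδ : δ = ε / 2) (hβ : β = ε / 2)
    (h₁ h₂ : ℝ)
    (hh1 : h₁ ≥ (1 - δ) * (k : ℝ) * f OPT₁ / ((k : ℝ) + k₁))
    (hh2 : h₂ ≥ (1 - δ) * (k : ℝ) * f OPT₂ / ((k : ℝ) + k₂))
    (hh21 : h₂ ≥ (1 - β) * h₁) :
    h₂ ≥ (1 / 3) * (1 - ε) * f OPT :=
  one_third_core_general f hmono hempty hsub k k₁ k₂ hk hk12 OPT OPT₁ OPT₂ hunion ε hε0 hε1 δ β hδ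
    hβ h₁ h₂ hh1 hh2 hh21
end
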